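/- arXiv:1509.00707 — 3 statements merged into one kernel-verified Lean document; each statement's English description precedes it below -/
import Mathlib

section
/- If U₁ = e^{iθ₁} M and U₂ = e^{iθ₂} M with M ∈ SU(2), θ₁, θ₂ ∈ [0, π], and det(I+U₁) = det(I+U₂) = 0, then U₁ = U₂ unless M = ±I. -/
lemma stmt6_aux (θ : ℝ) (M : Matrix (Fin 2) (Fin 2) ℂ) (hdet : M.det = 1)
    (hd : (1 + Complex.exp (θ * Complex.I) • M).det = 0) :
    M 0 0 + M 1 1 = -2 * Real.cos θ := by
  set z := Complex.exp (θ * Complex.I) with hz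
  set w := Complex.exp (-(θ * Complex.I)) with hw
  have hinv : z * w = 1 := by rw [hz, hw, ← Complex.exp_add]; simp
  have hcos : z + w = 2 * (Real.cos θ : ℂ) := by
    rw [hz, hw, Complex.ofReal_cos, Complex.cos]
    ring
  rw [Matrix.det_fin_two] at hd hdet
  simp only [Matrix.add_apply, Matrix.smul_apply, Matrix.one_apply, smul_eq_mul,
    if_pos rfl, Fin.zero_eq_one_iff, Fin.one_eq_zero_iff, Nat.succ_ne_self, if_true, if_false,
    if_neg (by decide : ¬ ((0 : Fin 2) = 1)), if_neg (by decide : ¬ ((1 : Fin 2) = 0))] at hd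
  have key : M 0 0 + M 1 1 = -(z + w) := by
    linear_combination w * hd -
      (M 0 0 + M 1 1 + z * (M 0 0 * M 1 1 - M 0 1 * M 1 0)) * hinv - z * hdet
  rw [key, hcos]; ring

/-- An element of `U(2)` with eigenvalue `-1` is determined by its `SU(2)` factor:
if `U₁ = e^{iθ₁} M`, `U₂ = e^{iθ₂} M` with `M ∈ SU(2)`, `θ₁, θ₂ ∈ [0, π]`,
`det(I + U₁) = det(I + U₂) = 0`, and `M ≠ ±I`, then `U₁ = U₂`. -/
theorem stmt6 (θ₁ θ₂ : ℝ) (M : Matrix (Fin 2) (Fin 2) ℂ)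
    (hM : M ∈ Matrix.specialUnitaryGroup (Fin 2) ℂ)
    (h1 : θ₁ ∈ Set.Icc 0 Real.pi) (h2 : θ₂ ∈ Set.Icc 0 Real.pi)
    (hd1 : (1 + Complex.exp (θ₁ * Complex.I) • M).det = 0)
    (hd2 : (1 + Complex.exp (θ₂ * Complex.I) • M).det = 0)
    (hMne : M ≠ 1 ∧ M ≠ -1) :
    Complex.exp (θ₁ * Complex.I) • M = Complex.exp (θ₂ * Complex.I) • M := by
  have hdet : M.det = 1 := (Matrix.mem_specialUnitaryGroup_iff.mp hM).2
  have e1 := stmt6_aux θ₁ M hdet hd1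
  have e2 := stmt6_aux θ₂ M hdet hd2
  have hc : (Real.cos θ₁ : ℂ) = Real.cos θ₂ := by
    have := e1.symm.trans e2
    field_simp at this
    exact_mod_cast neg_inj.mp (by exact_mod_cast this : -Real.cos θ₁ = -Real.cos θ₂)
  have : θ₁ = θ₂ := Real.injOn_cos h1 h2 (by exact_mod_cast hc)
  rw [this]
end

section
/- For K ∈ SL(2, ℝ) and φ ∈ ℝ, define U(e^{iφ}K) = c⁻¹·[[k₁₂ + k₂₁ + i(k₂₂ - k₁₁), 2i e^{-iφ}], [2i e^{iφ}, k₁₂ + k₂₁ - i(k₂₂ - k₁₁)]] where c = k₁₂ - k₂₁ + i(k₁₁ + k₂₂). Then c ≠ 0 and U(e^{iφ}K) is unitary. -/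
/-- The unitary matrix associated to the coupled boundary condition `e^{iφ}K`,
`K ∈ SL(2,ℝ)`. -/
noncomputable def Ucoupled (k11 k12 k21 k22 φ : ℝ) : Matrix (Fin 2) (Fin 2) ℂ :=
  (((k12 : ℂ) - k21) + Complex.I * ((k11 : ℂ) + k22))⁻¹ •
    !![((k12 : ℂ) + k21) + Complex.I * ((k22 : ℂ) - k11),
         2 * Complex.I * Complex.exp (-(φ * Complex.I));
       2 * Complex.I * Complex.exp (φ * Complex.I),
         ((k12 : ℂ) + k21) - Complex.I * ((k22 : ℂ) - k11)]

/-- For `K ∈ SL(2,ℝ)` and `φ ∈ ℝ`, the constant `c = k₁₂ - k₂₁ + i(k₁₁ + k₂₂)` is nonzero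
and `U(e^{iφ}K)` is unitary. -/
theorem stmt8 (k11 k12 k21 k22 φ : ℝ) (hdet : k11 * k22 - k12 * k21 = 1) :
    (((k12 : ℂ) - k21) + Complex.I * ((k11 : ℂ) + k22)) ≠ 0 ∧
    Ucoupled k11 k12 k21 k22 φ ∈ Matrix.unitaryGroup (Fin 2) ℂ := by
  have hd : (k11 : ℂ) * k22 - (k12 : ℂ) * k21 = 1 := by exact_mod_cast hdet
  have hI : (Complex.I) ^ 2 = -1 := Complex.I_sq
  have hc : (((k12 : ℂ) - k21) + Complex.I * ((k11 : ℂ) + k22)) ≠ 0 := by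
    intro h
    rw [Complex.ext_iff] at h
    simp [Complex.add_re, Complex.add_im, Complex.mul_re, Complex.mul_im] at h
    obtain ⟨h1, h2⟩ := h
    have e1 : k21 = k12 := by linarith
    have e2 : k22 = -k11 := by linarith
    rw [e1, e2] at hdet
    nlinarith [sq_nonneg k11, sq_nonneg k12]
  refine ⟨hc, ?_⟩
  rw [Matrix.mem_unitaryGroup_iff]
  set c : ℂ := ((k12 : ℂ) - k21) + Complex.I * ((k11 : ℂ) + k22) with hc_def
  set A : Matrix (Fin 2) (Fin 2) ℂ :=
    !![((k12 : ℂ) + k21) + Complex.I * ((k22 : ℂ) - k11),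
         2 * Complex.I * Complex.exp (-(φ * Complex.I));
       2 * Complex.I * Complex.exp (φ * Complex.I),
         ((k12 : ℂ) + k21) - Complex.I * ((k22 : ℂ) - k11)] with hA
  have hU : Ucoupled k11 k12 k21 k22 φ = c⁻¹ • A := rfl
  have he : Complex.exp (φ * Complex.I) * Complex.exp (-(φ * Complex.I)) = 1 := by
    rw [← Complex.exp_add]; ring_nf; exact Complex.exp_zero
  have hconj : (starRingEnd ℂ) (Complex.exp ((φ:ℂ) * Complex.I)) =
      Complex.exp (-(φ * Complex.I)) := by
    rw [← Complex.exp_conj]; congr 1; simp [Complex.conj_I, Complex.conj_ofReal]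
  have hconj' : (starRingEnd ℂ) (Complex.exp (-((φ:ℂ) * Complex.I))) =
      Complex.exp ((φ:ℂ) * Complex.I) := by
    rw [← Complex.exp_conj]; congr 1; simp [Complex.conj_I, Complex.conj_ofReal]
  have key : A * star A = (c * (starRingEnd ℂ) c) • 1 := by
    ext i j
    fin_cases i <;> fin_cases j <;>
      simp [hA, hc_def, Matrix.mul_apply, Fin.sum_univ_two, Matrix.star_apply,
        Matrix.conjTranspose_apply, Matrix.one_apply, Complex.star_def, smul_eq_mul,
        map_mul, map_add, map_sub, map_ofNat, Complex.conj_I, Complex.conj_ofReal,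
        hconj, hconj']
    · linear_combination (-4:ℂ)*hd + (4*(k11:ℂ)*k22 - 4)*hI + (-4*Complex.I^2)*he
    · ring
    · ring
    · linear_combination (-4:ℂ)*hd + (4*(k11:ℂ)*k22 - 4)*hI + (-4*Complex.I^2)*he
  rw [hU, star_smul, Matrix.smul_mul, Matrix.mul_smul, key, smul_smul, smul_smul]
  have h1 : c⁻¹ * (star c⁻¹ * (c * (starRingEnd ℂ) c)) = 1 := by
    rw [star_inv₀, Complex.star_def]
    have hcs : (starRingEnd ℂ) c ≠ 0 := by
      rw [← Complex.star_def]; exact star_ne_zero.mpr hc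
    field_simp
  have h2 : c⁻¹ * star c⁻¹ * (c * (starRingEnd ℂ) c) = 1 := by
    rw [mul_assoc]; exact h1
  rw [h2, one_smul]
end

section
/- For α ∈ [0, π) and t ∈ [-cos(α/2), cos(α/2)], γ ∈ ℝ, the matrix U = i e^{iα/2} · [[sin(α/2) + it, √(cos²(α/2) - t²) e^{iγ}], [-√(cos²(α/2) - t²) e^{-iγ}, sin(α/2) - it]] is unitary with eigenvalues -1 and e^{iα}. -/
/-!
Writing `s = sin (α/2)`, `c = cos (α/2)` and `r = √(c² - t²)`, the matrix is `z • Q` with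
`z = i e^{iα/2}` and `Q = !![a, b; -b̄, ā]` for `a = s + it`, `b = r e^{iγ}`. For such `Q` the
conjugate transpose is the adjugate, so `Q Qᴴ = det Q = |a|² + |b|² = s² + t² + r² = s² + c² = 1`;
as `|z| = 1`, `z • Q` is unitary. Its determinant is `z² = -e^{iα}` and its trace is
`z (a + ā) = 2 i s e^{iα/2} = e^{iα} - 1`.
-/

open Complex Matrix

section StarForm

variable {R : Type*} [CommRing R] [StarRing R]

theorem det_fin_two_of_star (a b : R) :
    (!![a, b; -star b, star a]).det = star a * a + star b * b := by
  rw [det_fin_two_of]; ring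

theorem star_fin_two_of_star_eq_adjugate (a b : R) :
    star !![a, b; -star b, star a] = adjugate !![a, b; -star b, star a] := by
  rw [adjugate_fin_two_of]
  ext i j
  fin_cases i <;> fin_cases j <;> simp

theorem mem_unitaryGroup_fin_two_of_star_mul_self_add {a b : R}
    (h : star a * a + star b * b = 1) :
    !![a, b; -star b, star a] ∈ unitaryGroup (Fin 2) R := by
  rw [mem_unitaryGroup_iff, star_fin_two_of_star_eq_adjugate, mul_adjugate, det_fin_two_of_star, h,
    one_smul]

end StarForm

namespace Complex

theorem star_ofReal_add_ofReal_mul_I_mul_self (x y : ℝ) :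
    star ((x : ℂ) + y * I) * ((x : ℂ) + y * I) = x ^ 2 + y ^ 2 := by
  rw [star_def, mul_comm, mul_conj, normSq_add_mul_I]; push_cast; ring

theorem star_ofReal_mul_exp_mul_I_mul_self (r γ : ℝ) :
    star ((r : ℂ) * exp (γ * I)) * ((r : ℂ) * exp (γ * I)) = r ^ 2 := by
  rw [star_def, mul_comm, mul_conj, normSq_mul, normSq_ofReal]
  simp [normSq_eq_norm_sq, norm_exp_ofReal_mul_I, sq]

theorem I_mul_exp_ofReal_mul_I_mem_unitary (x : ℝ) : I * exp (x * I) ∈ unitary ℂ := by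
  refine Submonoid.mul_mem _ ?_ ?_
  · simp [Unitary.mem_iff_star_mul_self]
  · rw [Unitary.mem_iff_star_mul_self, star_def, ← exp_conj, ← exp_add]; simp

theorem I_mul_exp_half_mul_I_sq (x : ℂ) : (I * exp (x / 2 * I)) ^ 2 = -exp (x * I) := by
  rw [mul_pow, I_sq, ← exp_nat_mul]; push_cast; ring_nf

theorem I_mul_exp_half_mul_I_mul_two_sin_half (x : ℂ) :
    I * exp (x / 2 * I) * (2 * sin (x / 2)) = exp (x * I) - 1 := by
  set e := exp (x / 2 * I)
  have he : e * exp (-(x / 2) * I) = 1 := by rw [← exp_add]; simp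
  have he2 : e * e = exp (x * I) := by rw [← exp_add]; ring_nf
  rw [sin]
  linear_combination (e * exp (-(x / 2) * I) - e * e) * I_sq - he + he2

end Complex

theorem stmt13_general (α t γ : ℝ)
    (ht : t ∈ Set.Icc (-(Real.cos (α / 2))) (Real.cos (α / 2))) :
    ((Complex.I * Complex.exp ((α / 2 : ℝ) * Complex.I)) •
        !![(Real.sin (α / 2) : ℂ) + t * Complex.I,
             (Real.sqrt (Real.cos (α / 2) ^ 2 - t ^ 2) : ℂ) * Complex.exp (γ * Complex.I);
           -((Real.sqrt (Real.cos (α / 2) ^ 2 - t ^ 2) : ℂ)) * Complex.exp (-(γ * Complex.I)),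
             (Real.sin (α / 2) : ℂ) - t * Complex.I] : Matrix (Fin 2) (Fin 2) ℂ)
      ∈ Matrix.unitaryGroup (Fin 2) ℂ ∧
    ((Complex.I * Complex.exp ((α / 2 : ℝ) * Complex.I)) •
        !![(Real.sin (α / 2) : ℂ) + t * Complex.I,
             (Real.sqrt (Real.cos (α / 2) ^ 2 - t ^ 2) : ℂ) * Complex.exp (γ * Complex.I);
           -((Real.sqrt (Real.cos (α / 2) ^ 2 - t ^ 2) : ℂ)) * Complex.exp (-(γ * Complex.I)),
             (Real.sin (α / 2) : ℂ) - t * Complex.I] : Matrix (Fin 2) (Fin 2) ℂ).trace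
      = -1 + Complex.exp (α * Complex.I) ∧
    ((Complex.I * Complex.exp ((α / 2 : ℝ) * Complex.I)) •
        !![(Real.sin (α / 2) : ℂ) + t * Complex.I,
             (Real.sqrt (Real.cos (α / 2) ^ 2 - t ^ 2) : ℂ) * Complex.exp (γ * Complex.I);
           -((Real.sqrt (Real.cos (α / 2) ^ 2 - t ^ 2) : ℂ)) * Complex.exp (-(γ * Complex.I)),
             (Real.sin (α / 2) : ℂ) - t * Complex.I] : Matrix (Fin 2) (Fin 2) ℂ).det
      = -Complex.exp (α * Complex.I) := by
  set a : ℂ := Real.sin (α / 2) + t * I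
  set r := Real.sqrt (Real.cos (α / 2) ^ 2 - t ^ 2)
  set b : ℂ := r * exp (γ * I)
  have hQ : !![a, b; -(r : ℂ) * exp (-(γ * I)), (Real.sin (α / 2) : ℂ) - t * I]
      = !![a, b; -star b, star a] := by
    simp [a, b, ← exp_conj, neg_mul, sub_eq_add_neg, -ofReal_sin]
  have hab : star a * a + star b * b = 1 := by
    have hr : r ^ 2 = Real.cos (α / 2) ^ 2 - t ^ 2 :=
      Real.sq_sqrt (sub_nonneg.2 (sq_le_sq' ht.1 ht.2))
    rw [star_ofReal_add_ofReal_mul_I_mul_self, star_ofReal_mul_exp_mul_I_mul_self]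
    exact_mod_cast by linear_combination hr + Real.sin_sq_add_cos_sq (α / 2)
  rw [hQ]
  refine ⟨Unitary.smul_mem_of_mem (I_mul_exp_ofReal_mul_I_mem_unitary _)
    (mem_unitaryGroup_fin_two_of_star_mul_self_add hab), ?_, ?_⟩
  · have htr : a + star a = 2 * (Real.sin (α / 2) : ℂ) := by
      simp only [a, star_add, RCLike.star_def, conj_ofReal, star_mul', conj_I, mul_neg]; ring
    rw [trace_smul, trace_fin_two_of, htr, smul_eq_mul, ofReal_sin, ofReal_div, ofReal_ofNat,
      I_mul_exp_half_mul_I_mul_two_sin_half]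
    ring
  · rw [det_smul, det_fin_two_of_star, hab, Fintype.card_fin, mul_one, ofReal_div, ofReal_ofNat,
      I_mul_exp_half_mul_I_sq]

/-- For `α ∈ [0, π)`, `t ∈ [-cos(α/2), cos(α/2)]`, `γ ∈ ℝ`, the matrix
`U = i e^{iα/2} [[sin(α/2) + it, √(cos²(α/2) - t²) e^{iγ}],
[-√(cos²(α/2) - t²) e^{-iγ}, sin(α/2) - it]]` is unitary with eigenvalues `-1` and
`e^{iα}` (equivalently, trace `-1 + e^{iα}` and determinant `-e^{iα}`). -/
theorem stmt13 (α t γ : ℝ) (hα : α ∈ Set.Ico 0 Real.pi)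
    (ht : t ∈ Set.Icc (-(Real.cos (α / 2))) (Real.cos (α / 2))) :
    ((Complex.I * Complex.exp ((α / 2 : ℝ) * Complex.I)) •
        !![(Real.sin (α / 2) : ℂ) + t * Complex.I,
             (Real.sqrt (Real.cos (α / 2) ^ 2 - t ^ 2) : ℂ) * Complex.exp (γ * Complex.I);
           -((Real.sqrt (Real.cos (α / 2) ^ 2 - t ^ 2) : ℂ)) * Complex.exp (-(γ * Complex.I)),
             (Real.sin (α / 2) : ℂ) - t * Complex.I] : Matrix (Fin 2) (Fin 2) ℂ)
      ∈ Matrix.unitaryGroup (Fin 2) ℂ ∧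
    ((Complex.I * Complex.exp ((α / 2 : ℝ) * Complex.I)) •
        !![(Real.sin (α / 2) : ℂ) + t * Complex.I,
             (Real.sqrt (Real.cos (α / 2) ^ 2 - t ^ 2) : ℂ) * Complex.exp (γ * Complex.I);
           -((Real.sqrt (Real.cos (α / 2) ^ 2 - t ^ 2) : ℂ)) * Complex.exp (-(γ * Complex.I)),
             (Real.sin (α / 2) : ℂ) - t * Complex.I] : Matrix (Fin 2) (Fin 2) ℂ).trace
      = -1 + Complex.exp (α * Complex.I) ∧
    ((Complex.I * Complex.exp ((α / 2 : ℝ) * Complex.I)) •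
        !![(Real.sin (α / 2) : ℂ) + t * Complex.I,
             (Real.sqrt (Real.cos (α / 2) ^ 2 - t ^ 2) : ℂ) * Complex.exp (γ * Complex.I);
           -((Real.sqrt (Real.cos (α / 2) ^ 2 - t ^ 2) : ℂ)) * Complex.exp (-(γ * Complex.I)),
             (Real.sin (α / 2) : ℂ) - t * Complex.I] : Matrix (Fin 2) (Fin 2) ℂ).det
      = -Complex.exp (α * Complex.I) :=
  stmt13_general α t γ ht
end
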